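/- arXiv:1705.09634 — 5 statements merged into one kernel-verified Lean document; each statement's English description precedes it below -/
import Mathlib

section
/- Let r, c ∈ Δ_n and F ∈ ℝ₊^{n×n}. Define F' = XF where X is diagonal with Xᵢᵢ = min(rᵢ/rᵢ(F), 1), F'' = F'Y where Y is diagonal with Yⱼⱼ = min(cⱼ/cⱼ(F'), 1), err_r = r − r(F''), err_c = c − c(F''), and G = F'' + err_r err_cᵀ/‖err_r‖₁. Then G has nonnegative entries, row sums r, and column sums c, and ‖G − F‖₁ ≤ 2(‖r(F) − r‖₁ + ‖c(F) − c‖₁). -/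
/-!
`F'' ≤ F' ≤ F` entrywise, and the two scalings leave every row sum of `F''` below `r` and every
column sum below `c`, so both error vectors are nonnegative with the same total mass `1 - ∑ F''`;
hence the rank-one correction `err_r err_cᵀ / ‖err_r‖₁` is nonnegative and restores the margins
exactly. Since `G ≥ F''` and `F ≥ F''`, we get `|G - F| ≤ (F - F'') + (G - F'')`, and summing,
`‖G - F‖₁ ≤ (∑ F - ∑ F'') + (1 - ∑ F'')`. Splitting at `F'`, the row-scaling losses add up to
`‖r(F) - r‖₁`, and the column-scaling loss `∑ F' - ∑ F''` is counted twice and is at most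
`‖c(F) - c‖₁`.
-/

open Finset

namespace Round

variable {ι κ : Type*}

lemma min_div_one_mul_nonneg {a s x : ℝ} (ha : 0 ≤ a) (hs : 0 ≤ s) (hx : 0 ≤ x) :
    0 ≤ min (a / s) 1 * x :=
  mul_nonneg (le_min (div_nonneg ha hs) zero_le_one) hx

lemma min_div_one_mul_le {a s x : ℝ} (hx : 0 ≤ x) : min (a / s) 1 * x ≤ x :=
  mul_le_of_le_one_left hx (min_le_right _ _)

lemma sum_min_div_one_mul [Fintype κ] {a : ℝ} {f : κ → ℝ} (ha : 0 ≤ a) (hf : ∀ j, 0 ≤ f j) :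
    ∑ j, min (a / ∑ j', f j') 1 * f j = min a (∑ j, f j) := by
  rw [← mul_sum]
  rcases (sum_nonneg fun j _ ↦ hf j : 0 ≤ ∑ j, f j).eq_or_lt with hS | hS
  · rw [← hS, mul_zero, min_eq_right ha]
  · rw [min_mul_of_nonneg _ _ hS.le, div_mul_cancel₀ _ hS.ne', one_mul]

lemma row_scaling_spec [Fintype κ] {F F' : ι → κ → ℝ} {r : ι → ℝ} (hr : ∀ i, 0 ≤ r i)
    (hF : ∀ i j, 0 ≤ F i j) (hF' : ∀ i j, F' i j = min (r i / ∑ j', F i j') 1 * F i j) :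
    (∀ i j, 0 ≤ F' i j) ∧ (∀ i j, F' i j ≤ F i j) ∧
      ∀ i, ∑ j, F' i j = min (r i) (∑ j, F i j) :=
  ⟨fun i j ↦ hF' i j ▸ min_div_one_mul_nonneg (hr i) (sum_nonneg fun j _ ↦ hF i j) (hF i j),
    fun i j ↦ hF' i j ▸ min_div_one_mul_le (hF i j),
    fun i ↦ by simp_rw [hF' i]; exact sum_min_div_one_mul (hr i) (hF i)⟩

lemma sum_mul_div_of_sum_eq [Fintype κ] {a s : ℝ} {b : κ → ℝ} (hb : ∑ j, b j = s) (hs : s ≠ 0) :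
    ∑ j, a * b j / s = a := by
  rw [← sum_div, ← mul_sum, hb, mul_div_cancel_right₀ _ hs]

lemma sum_add_mul_div_row [Fintype κ] {H : ι → κ → ℝ} {er : ι → ℝ} {ec : κ → ℝ} {s : ℝ}
    (hec : ∑ j, ec j = s) (hs : s ≠ 0) (i : ι) :
    ∑ j, (H i j + er i * ec j / s) = ∑ j, H i j + er i := by
  rw [sum_add_distrib, sum_mul_div_of_sum_eq hec hs]

lemma sum_add_mul_div_col [Fintype ι] {H : ι → κ → ℝ} {er : ι → ℝ} {ec : κ → ℝ} {s : ℝ}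
    (her : ∑ i, er i = s) (hs : s ≠ 0) (j : κ) :
    ∑ i, (H i j + er i * ec j / s) = ∑ i, H i j + ec j := by
  simp_rw [sum_add_distrib, mul_comm (er _)]
  rw [sum_mul_div_of_sum_eq her hs]

lemma sum_sub_row_sum_eq_sum_sub_col_sum [Fintype ι] [Fintype κ] {r : ι → ℝ} {c : κ → ℝ}
    (H : ι → κ → ℝ) (hrc : ∑ i, r i = ∑ j, c j) :
    ∑ i, (r i - ∑ j, H i j) = ∑ j, (c j - ∑ i, H i j) := by
  rw [sum_sub_distrib, sum_sub_distrib, hrc, sum_comm]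

lemma abs_sub_le_sub_add_sub {f g h : ℝ} (hf : h ≤ f) (hg : h ≤ g) :
    |g - f| ≤ (f - h) + (g - h) :=
  abs_sub_le_iff.2 ⟨by linarith, by linarith⟩

lemma sub_min_add_sub_min (a b : ℝ) : (a - min b a) + (b - min b a) = |a - b| := by
  linarith [max_sub_min_eq_abs' a b, min_add_max b a, min_comm a b, max_comm a b]

lemma sub_min_le_abs_sub_of_le {x y c : ℝ} (hxy : x ≤ y) : x - min c x ≤ |y - c| := by
  rcases le_total c x with h | h
  · rw [min_eq_left h]; linarith [le_abs_self (y - c)]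
  · rw [min_eq_right h, sub_self]; exact abs_nonneg _

lemma sum_abs_sub_le [Fintype ι] [Fintype κ] {F G H : ι → κ → ℝ} {r : ι → ℝ}
    (hF : ∀ i j, H i j ≤ F i j) (hG : ∀ i j, H i j ≤ G i j) (hGr : ∀ i, ∑ j, G i j = r i) :
    ∑ i, ∑ j, |G i j - F i j| ≤
      (∑ i, ∑ j, F i j - ∑ i, ∑ j, H i j) + (∑ i, r i - ∑ i, ∑ j, H i j) := by
  calc ∑ i, ∑ j, |G i j - F i j|
      ≤ ∑ i, ∑ j, ((F i j - H i j) + (G i j - H i j)) :=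
        sum_le_sum fun i _ ↦ sum_le_sum fun j _ ↦ abs_sub_le_sub_add_sub (hF i j) (hG i j)
    _ = _ := by simp only [sum_add_distrib, sum_sub_distrib, hGr]

lemma row_scaling_loss [Fintype ι] [Fintype κ] {F F' : ι → κ → ℝ} {r : ι → ℝ}
    (hrow : ∀ i, ∑ j, F' i j = min (r i) (∑ j, F i j)) :
    (∑ i, ∑ j, F i j - ∑ i, ∑ j, F' i j) + (∑ i, r i - ∑ i, ∑ j, F' i j) =
      ∑ i, |∑ j, F i j - r i| := by
  simp only [← sum_sub_distrib, ← sum_add_distrib, hrow, sub_min_add_sub_min]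

lemma col_scaling_loss_le [Fintype ι] [Fintype κ] {F F' F'' : ι → κ → ℝ} {c : κ → ℝ}
    (hF'F : ∀ i j, F' i j ≤ F i j)
    (hcol : ∀ j, ∑ i, F'' i j = min (c j) (∑ i, F' i j)) :
    ∑ i, ∑ j, F' i j - ∑ i, ∑ j, F'' i j ≤ ∑ j, |∑ i, F i j - c j| := by
  rw [sum_comm (f := fun i j ↦ F' i j), sum_comm (f := fun i j ↦ F'' i j), ← sum_sub_distrib]
  exact sum_le_sum fun j _ ↦ by
    rw [hcol j]; exact sub_min_le_abs_sub_of_le (sum_le_sum fun i _ ↦ hF'F i j)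

end Round

open Round in
/-- Rounding guarantee (Lemma 7): the output `G` of `round(F, U_{r,c})` lies in the
transport polytope `U_{r,c}` and satisfies
`‖G − F‖₁ ≤ 2(‖r(F) − r‖₁ + ‖c(F) − c‖₁)`. -/
theorem round_guarantee (n : ℕ) (r c : Fin n → ℝ) (F F' F'' G : Fin n → Fin n → ℝ)
    (err_r err_c : Fin n → ℝ)
    (hr0 : ∀ i, 0 ≤ r i) (hr1 : ∑ i, r i = 1)
    (hc0 : ∀ j, 0 ≤ c j) (hc1 : ∑ j, c j = 1)
    (hF : ∀ i j, 0 ≤ F i j)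
    (hF' : ∀ i j, F' i j = min (r i / ∑ j', F i j') 1 * F i j)
    (hF'' : ∀ i j, F'' i j = F' i j * min (c j / ∑ i', F' i' j) 1)
    (herr_r : ∀ i, err_r i = r i - ∑ j, F'' i j)
    (herr_c : ∀ j, err_c j = c j - ∑ i, F'' i j)
    (hpos : 0 < ∑ i, |err_r i|)
    (hG : ∀ i j, G i j = F'' i j + err_r i * err_c j / ∑ i', |err_r i'|) :
    (∀ i j, 0 ≤ G i j) ∧ (∀ i, ∑ j, G i j = r i) ∧ (∀ j, ∑ i, G i j = c j) ∧
      ∑ i, ∑ j, |G i j - F i j| ≤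
        2 * ((∑ i, |(∑ j, F i j) - r i|) + ∑ j, |(∑ i, F i j) - c j|) := by
  obtain ⟨hF'0, hF'F, hrow⟩ := row_scaling_spec hr0 hF hF'
  obtain ⟨hF''0, hF''F', hcol⟩ := row_scaling_spec (F := fun j i ↦ F' i j)
    (F' := fun j i ↦ F'' i j) hc0 (fun j i ↦ hF'0 i j) fun j i ↦ (hF'' i j).trans (mul_comm _ _)
  have her0 : ∀ i, 0 ≤ err_r i := fun i ↦ by
    rw [herr_r, sub_nonneg]
    exact (sum_le_sum fun j _ ↦ hF''F' j i).trans ((hrow i).trans_le (min_le_left _ _))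
  have hec0 : ∀ j, 0 ≤ err_c j := fun j ↦ by
    rw [herr_c, sub_nonneg, hcol j]; exact min_le_left _ _
  have hmass_r : ∑ i, err_r i = ∑ i', |err_r i'| :=
    sum_congr rfl fun i _ ↦ (abs_of_nonneg (her0 i)).symm
  have hmass_c : ∑ j, err_c j = ∑ i', |err_r i'| := by
    simp only [herr_r, herr_c] at hmass_r ⊢
    rw [← hmass_r, sum_sub_row_sum_eq_sum_sub_col_sum F'' (hr1.trans hc1.symm)]
  have hGr : ∀ i, ∑ j, G i j = r i := fun i ↦ by
    simp_rw [hG i]; rw [sum_add_mul_div_row hmass_c hpos.ne', herr_r]; ring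
  have hGc : ∀ j, ∑ i, G i j = c j := fun j ↦ by
    simp_rw [hG _ j]; rw [sum_add_mul_div_col hmass_r hpos.ne', herr_c]; ring
  have hF''G : ∀ i j, F'' i j ≤ G i j := fun i j ↦ by
    rw [hG]
    exact le_add_of_nonneg_right (div_nonneg (mul_nonneg (her0 i) (hec0 j)) hpos.le)
  refine ⟨fun i j ↦ (hF''0 j i).trans (hF''G i j), hGr, hGc, ?_⟩
  have hdist := sum_abs_sub_le (fun i j ↦ (hF''F' j i).trans (hF'F i j)) hF''G hGr
  linarith [row_scaling_loss hrow, col_scaling_loss_le hF'F hcol,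
    sum_nonneg fun i (_ : i ∈ univ) ↦ abs_nonneg (∑ j, F i j - r i)]
end

section
/- Let A ∈ ℝ₊^{n×n} with all entries positive, f(x,y) := ∑ᵢⱼ Aᵢⱼ e^{xᵢ+yⱼ} − ⟨r,x⟩ − ⟨c,y⟩ for fixed r, c ∈ Δ_n. Let (x*, y*) be scaling vectors such that B := D(e^{x*})A D(e^{y*}) has row sums r and column sums c (so ‖B‖₁ = 1). If ‖A‖₁ = 1 and ℓ = minᵢⱼ Aᵢⱼ, then x*ᵢ + y*ⱼ ≤ log(1/ℓ) for all i, j, and consequently f(0,0) − f(x*,y*) = ⟨r,x*⟩ + ⟨c,y*⟩ ≤ log(1/ℓ). -/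
/-- Potential gap bound (Lemma 3): if `A` is positive with `‖A‖₁ = 1` and smallest
entry `ℓ`, and `(x*, y*)` scale `A` into `U_{r,c}`, then `x*ᵢ + y*ⱼ ≤ log(1/ℓ)` for
all `i, j`, and `f(0,0) − f(x*,y*) = ⟨r,x*⟩ + ⟨c,y*⟩ ≤ log(1/ℓ)`. -/
theorem sinkhorn_potential_gap (n : ℕ) (A B : Fin n → Fin n → ℝ)
    (r c xs ys : Fin n → ℝ) (ℓ : ℝ)
    (hA : ∀ i j, 0 < A i j) (hA1 : ∑ i, ∑ j, A i j = 1)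
    (hℓ : ∀ i j, ℓ ≤ A i j) (hℓmem : ∃ i j, A i j = ℓ)
    (hr0 : ∀ i, 0 ≤ r i) (hr1 : ∑ i, r i = 1)
    (hc0 : ∀ j, 0 ≤ c j) (hc1 : ∑ j, c j = 1)
    (hB : ∀ i j, B i j = Real.exp (xs i) * A i j * Real.exp (ys j))
    (hrow : ∀ i, ∑ j, B i j = r i) (hcol : ∀ j, ∑ i, B i j = c j) :
    (∀ i j, xs i + ys j ≤ Real.log (1 / ℓ)) ∧
      ((∑ i, ∑ j, A i j * Real.exp ((0:ℝ) + 0)) - (∑ i, r i * 0) - (∑ j, c j * 0))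
          - ((∑ i, ∑ j, A i j * Real.exp (xs i + ys j))
              - (∑ i, r i * xs i) - (∑ j, c j * ys j))
        = (∑ i, r i * xs i) + (∑ j, c j * ys j) ∧
      (∑ i, r i * xs i) + (∑ j, c j * ys j) ≤ Real.log (1 / ℓ) := by
  obtain ⟨i₀, j₀, hij₀⟩ := hℓmem
  have hℓpos : 0 < ℓ := hij₀ ▸ hA i₀ j₀
  -- B entries positive and sum to 1
  have hBpos : ∀ i j, 0 < B i j := fun i j => by
    rw [hB]
    exact mul_pos (mul_pos (Real.exp_pos _) (hA i j)) (Real.exp_pos _)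
  have hBsum : ∑ i, ∑ j, B i j = 1 := by simp [hrow, hr1]
  have hBle : ∀ i j, B i j ≤ 1 := by
    intro i j
    calc B i j ≤ ∑ j', B i j' :=
          Finset.single_le_sum (fun j' _ => (hBpos i j').le) (Finset.mem_univ j)
      _ ≤ ∑ i', ∑ j', B i' j' :=
          Finset.single_le_sum (fun i' _ => Finset.sum_nonneg fun j' _ => (hBpos i' j').le)
            (Finset.mem_univ i)
      _ = 1 := hBsum
  have hABe : ∀ i j, A i j * Real.exp (xs i + ys j) = B i j := fun i j => by
    rw [hB, Real.exp_add]; ring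
  have h1 : ∀ i j, xs i + ys j ≤ Real.log (1 / ℓ) := by
    intro i j
    rw [Real.le_log_iff_exp_le (by positivity)]
    rw [le_div_iff₀ hℓpos]
    calc Real.exp (xs i + ys j) * ℓ ≤ A i j * Real.exp (xs i + ys j) := by
          rw [mul_comm]
          exact mul_le_mul_of_nonneg_right (hℓ i j) (Real.exp_pos _).le
      _ = B i j := hABe i j
      _ ≤ 1 := hBle i j
  refine ⟨h1, ?_, ?_⟩
  · have : ∑ i, ∑ j, A i j * Real.exp (xs i + ys j) = 1 := by
      simp only [hABe]; exact hBsum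
    rw [this]
    simp [hA1]
    ring
  · have hx : ∑ i, ∑ j, r i * c j * xs i = ∑ i, r i * xs i := by
      refine Finset.sum_congr rfl fun i _ => ?_
      calc ∑ j, r i * c j * xs i = (r i * xs i) * ∑ j, c j := by
            rw [Finset.mul_sum]; exact Finset.sum_congr rfl fun j _ => by ring
        _ = r i * xs i := by rw [hc1, mul_one]
    have hy : ∑ i, ∑ j, r i * c j * ys j = ∑ j, c j * ys j := by
      rw [Finset.sum_comm]
      refine Finset.sum_congr rfl fun j _ => ?_
      calc ∑ i, r i * c j * ys j = (c j * ys j) * ∑ i, r i := by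
            rw [Finset.mul_sum]; exact Finset.sum_congr rfl fun i _ => by ring
        _ = c j * ys j := by rw [hr1, mul_one]
    have hkey : ∑ i, ∑ j, r i * c j * (xs i + ys j)
        = (∑ i, r i * xs i) + (∑ j, c j * ys j) := by
      simp only [mul_add, Finset.sum_add_distrib]
      rw [hx, hy]
    rw [← hkey]
    have hL : ∑ i, ∑ j, r i * c j * Real.log (1 / ℓ) = Real.log (1 / ℓ) := by
      have : ∀ i, ∑ j, r i * c j * Real.log (1 / ℓ) = r i * Real.log (1 / ℓ) := by
        intro i
        calc ∑ j, r i * c j * Real.log (1 / ℓ)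
            = (r i * Real.log (1 / ℓ)) * ∑ j, c j := by
              rw [Finset.mul_sum]; exact Finset.sum_congr rfl fun j _ => by ring
          _ = r i * Real.log (1 / ℓ) := by rw [hc1, mul_one]
      rw [Finset.sum_congr rfl fun i _ => this i, ← Finset.sum_mul, hr1, one_mul]
    calc ∑ i, ∑ j, r i * c j * (xs i + ys j)
        ≤ ∑ i, ∑ j, r i * c j * Real.log (1 / ℓ) := by
          refine Finset.sum_le_sum fun i _ => Finset.sum_le_sum fun j _ => ?_
          exact mul_le_mul_of_nonneg_left (h1 i j) (mul_nonneg (hr0 i) (hc0 j))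
      _ = Real.log (1 / ℓ) := hL
end

section
/- Let A', A'' ∈ ℝ₊^{n×n} be matrices differing only in row I, with A''_{Ij} = (r_I / r_I(A')) A'_{Ij} for all j, and let scaling vectors (x', y'), (x'', y'') satisfy y'' = y', x''ᵢ = x'ᵢ for i ≠ I, and x''_I = x'_I + log(r_I/r_I(A')). Then for f(x,y) := ∑ᵢⱼ Aᵢⱼ e^{xᵢ+yⱼ} − ⟨r,x⟩ − ⟨c,y⟩ (with A' = D(e^{x'})A D(e^{y'}), A'' = D(e^{x''})A D(e^{y''})), one has f(x',y') − f(x'',y'') = r_I(A') − r_I + r_I log(r_I/r_I(A')) = ρ(r_I, r_I(A')). -/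
/-- Greenkhorn per-step improvement (Lemma 5): if a single row `I` is updated, the
potential decreases by exactly `ρ(r_I, r_I(A')) = r_I(A') − r_I + r_I log(r_I/r_I(A'))`. -/
theorem greenkhorn_row_improvement (n : ℕ) (A A' A'' : Fin n → Fin n → ℝ)
    (r c x' y' x'' y'' : Fin n → ℝ) (I : Fin n)
    (hA : ∀ i j, 0 < A i j)
    (hr0 : ∀ i, 0 ≤ r i) (hr1 : ∑ i, r i = 1)
    (hc0 : ∀ j, 0 ≤ c j) (hc1 : ∑ j, c j = 1)
    (hA' : ∀ i j, A' i j = Real.exp (x' i) * A i j * Real.exp (y' j))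
    (hA'' : ∀ i j, A'' i j = Real.exp (x'' i) * A i j * Real.exp (y'' j))
    (hy : ∀ j, y'' j = y' j)
    (hx : ∀ i, i ≠ I → x'' i = x' i)
    (hxI : x'' I = x' I + Real.log (r I / ∑ j, A' I j))
    (hrow : ∀ j, A'' I j = (r I / ∑ j', A' I j') * A' I j) :
    ((∑ i, ∑ j, A i j * Real.exp (x' i + y' j)) - (∑ i, r i * x' i) - (∑ j, c j * y' j))
      - ((∑ i, ∑ j, A i j * Real.exp (x'' i + y'' j))
          - (∑ i, r i * x'' i) - (∑ j, c j * y'' j))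
      = (∑ j, A' I j) - r I + r I * Real.log (r I / ∑ j, A' I j) := by
  have hS : 0 < ∑ j, A' I j := by
    apply Finset.sum_pos
    · intro j _; rw [hA']; exact mul_pos (mul_pos (Real.exp_pos _) (hA I j)) (Real.exp_pos _)
    · exact ⟨I, Finset.mem_univ I⟩
  have h1 : ∀ i j, A i j * Real.exp (x' i + y' j) = A' i j := by
    intro i j; rw [hA', Real.exp_add]; ring
  have h2 : ∀ i j, A i j * Real.exp (x'' i + y'' j) = A'' i j := by
    intro i j; rw [hA'', Real.exp_add]; ring
  have hrowsum : ∑ j, A'' I j = r I := by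
    simp_rw [hrow]
    rw [← Finset.mul_sum, div_mul_cancel₀ _ (ne_of_gt hS)]
  simp_rw [h1, h2]
  have hyc : ∑ j, c j * y'' j = ∑ j, c j * y' j := by simp [hy]
  rw [hyc]
  have hsum1 : ∑ i, ∑ j, A' i j - ∑ i, ∑ j, A'' i j = ∑ j, A' I j - r I := by
    rw [← Finset.sum_sub_distrib]
    rw [Finset.sum_eq_single_of_mem I (Finset.mem_univ I)]
    · rw [hrowsum]
    · intro i _ hi
      have : ∀ j, A'' i j = A' i j := by
        intro j; rw [hA', hA'', hx i hi, hy]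
      simp [this]
  have hsum2 : ∑ i, r i * x'' i - ∑ i, r i * x' i
      = r I * Real.log (r I / ∑ j, A' I j) := by
    rw [← Finset.sum_sub_distrib]
    rw [Finset.sum_eq_single_of_mem I (Finset.mem_univ I)]
    · rw [hxI]; ring
    · intro i _ hi; rw [hx i hi]; ring
  linarith [hsum1, hsum2]
end

section
/- Let C ∈ ℝ₊^{n×n}, η > 0, r, c ∈ Δ_n. If P = D(u) e^{−ηC} D(v) for positive vectors u, v and P ∈ U_{r,c}, then P is the unique minimizer of ⟨Q,C⟩ − η⁻¹H(Q) over Q ∈ U_{r,c}. -/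
/-!
Writing `log P i j = log u i + log v j - η C i j`, the transport cost of any `R` becomes
`η⁻¹ (∑ R i j (log u i + log v j) - ∑ R i j log P i j)`. The first sum depends on `R` only
through its marginals, so on `U_{r,c}` the objective equals a constant plus
`η⁻¹ KL(R ‖ P)`, and Gibbs' inequality shows that `KL(Q ‖ P) > 0` for `Q ≠ P`.
-/

open Real Finset InformationTheory

lemma mul_log_sub_mul_log_eq_sub_add_mul_klFun {x y : ℝ} (hx : 0 ≤ x) (hy : 0 < y) :
    x * log x - x * log y = x - y + y * klFun (x / y) := by
  rcases hx.eq_or_lt with rfl | hx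
  · simp [klFun_zero]
  · rw [klFun_apply, log_div hx.ne' hy.ne']
    field_simp
    ring

lemma klFun_pos {x : ℝ} (hx : 0 ≤ x) (hx1 : x ≠ 1) : 0 < klFun x :=
  (klFun_nonneg hx).lt_of_ne fun h => hx1 ((klFun_eq_zero_iff hx).mp h.symm)

/-- Gibbs' inequality. -/
lemma sum_mul_log_sub_mul_log_pos {ι : Type*} [Fintype ι] {p q : ι → ℝ}
    (hq : ∀ i, 0 ≤ q i) (hp : ∀ i, 0 < p i) (hsum : ∑ i, q i = ∑ i, p i) (hne : q ≠ p) :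
    0 < ∑ i, (q i * log (q i) - q i * log (p i)) := by
  obtain ⟨i₀, hi₀⟩ := Function.ne_iff.mp hne
  have hratio : ∀ i, 0 ≤ q i / p i := fun i => div_nonneg (hq i) (hp i).le
  have hratio_ne : q i₀ / p i₀ ≠ 1 := fun h => hi₀ ((div_eq_one_iff_eq (hp i₀).ne').mp h)
  calc 0 < ∑ i, p i * klFun (q i / p i) :=
        sum_pos' (fun i _ => mul_nonneg (hp i).le (klFun_nonneg (hratio i)))
          ⟨i₀, mem_univ _, mul_pos (hp i₀) (klFun_pos (hratio i₀) hratio_ne)⟩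
    _ = ∑ i, (q i * log (q i) - q i * log (p i)) := by
        simp only [fun i => mul_log_sub_mul_log_eq_sub_add_mul_klFun (hq i) (hp i),
          sum_add_distrib, sum_sub_distrib, hsum, sub_self, zero_add]

section Matrix

variable {ι κ : Type*} [Fintype ι] [Fintype κ]

lemma sum_sum_mul_add_eq_of_marginals_eq {R S : ι → κ → ℝ}
    (hrow : ∀ i, ∑ j, R i j = ∑ j, S i j) (hcol : ∀ j, ∑ i, R i j = ∑ i, S i j)
    (a : ι → ℝ) (b : κ → ℝ) :
    ∑ i, ∑ j, R i j * (a i + b j) = ∑ i, ∑ j, S i j * (a i + b j) := by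
  have split : ∀ T : ι → κ → ℝ, ∑ i, ∑ j, T i j * (a i + b j) =
      ∑ i, (∑ j, T i j) * a i + ∑ j, (∑ i, T i j) * b j := by
    intro T
    simp only [mul_add, sum_add_distrib, sum_mul]
    rw [sum_comm (f := fun i j => T i j * b j)]
  rw [split, split]
  simp only [hrow, hcol]

lemma mul_entropic_objective_eq {C P R : ι → κ → ℝ} {η : ℝ} {a : ι → ℝ} {b : κ → ℝ}
    (hη : η ≠ 0) (hlogP : ∀ i j, log (P i j) = a i + b j - η * C i j) :
    η * ((∑ i, ∑ j, R i j * C i j) + η⁻¹ * ∑ i, ∑ j, R i j * log (R i j)) =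
      ∑ i, ∑ j, R i j * (a i + b j) + ∑ i, ∑ j, (R i j * log (R i j) - R i j * log (P i j)) := by
  have hC : ∀ i j, η * C i j = a i + b j - log (P i j) := fun i j => by
    rw [hlogP]; ring
  rw [mul_add, ← mul_assoc, mul_inv_cancel₀ hη, one_mul, mul_sum]
  simp only [mul_sum, ← sum_add_distrib]
  refine sum_congr rfl fun i _ => sum_congr rfl fun j _ => ?_
  rw [mul_left_comm, hC]
  ring

end Matrix

theorem diag_scaling_is_unique_minimizer_general (n : ℕ) (C : Fin n → Fin n → ℝ)
    (η : ℝ) (r c u v : Fin n → ℝ) (P : Fin n → Fin n → ℝ)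
    (hη : 0 < η)
    (hu : ∀ i, 0 < u i) (hv : ∀ j, 0 < v j)
    (hP : ∀ i j, P i j = u i * Real.exp (-η * C i j) * v j)
    (hProw : ∀ i, ∑ j, P i j = r i) (hPcol : ∀ j, ∑ i, P i j = c j) :
    ∀ Q : Fin n → Fin n → ℝ,
      (∀ i j, 0 ≤ Q i j) → (∀ i, ∑ j, Q i j = r i) → (∀ j, ∑ i, Q i j = c j) →
      Q ≠ P →
      (∑ i, ∑ j, P i j * C i j) + η⁻¹ * ∑ i, ∑ j, P i j * Real.log (P i j)
        < (∑ i, ∑ j, Q i j * C i j) + η⁻¹ * ∑ i, ∑ j, Q i j * Real.log (Q i j) := by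
  intro Q hQ0 hQr hQc hQne
  have hu_exp : ∀ i j, 0 < u i * exp (-η * C i j) := fun i j => mul_pos (hu i) (exp_pos _)
  have hPpos : ∀ i j, 0 < P i j := fun i j => hP i j ▸ mul_pos (hu_exp i j) (hv j)
  have hlogP : ∀ i j, log (P i j) = log (u i) + log (v j) - η * C i j := fun i j => by
    rw [hP, log_mul (hu_exp i j).ne' (hv j).ne', log_mul (hu i).ne' (exp_pos _).ne', log_exp]
    ring
  have hkl : 0 < ∑ i, ∑ j, (Q i j * log (Q i j) - Q i j * log (P i j)) := by
    simpa only [Fintype.sum_prod_type, Function.uncurry_apply_pair] using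
      sum_mul_log_sub_mul_log_pos (p := Function.uncurry P) (q := Function.uncurry Q)
        (fun x => hQ0 x.1 x.2) (fun x => hPpos x.1 x.2)
        (by simp only [Fintype.sum_prod_type, Function.uncurry_apply_pair, hQr, hProw])
        (Function.uncurry_injective.ne hQne)
  have hpot := sum_sum_mul_add_eq_of_marginals_eq (R := Q) (S := P)
    (fun i => (hQr i).trans (hProw i).symm) (fun j => (hQc j).trans (hPcol j).symm)
    (fun i => log (u i)) (fun j => log (v j))
  refine lt_of_mul_lt_mul_left ?_ hη.le
  rw [mul_entropic_objective_eq hη.ne' hlogP, mul_entropic_objective_eq hη.ne' hlogP, hpot]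
  simp only [sub_self, sum_const_zero, add_zero]
  linarith

/-- Lemma 1 (Cuturi): if `P = D(u) e^{−ηC} D(v)` with positive `u, v` lies in
`U_{r,c}`, then `P` is the unique minimizer of `⟨Q,C⟩ − η⁻¹H(Q)` over `U_{r,c}`. -/
theorem diag_scaling_is_unique_minimizer (n : ℕ) (C : Fin n → Fin n → ℝ)
    (η : ℝ) (r c u v : Fin n → ℝ) (P : Fin n → Fin n → ℝ)
    (hC : ∀ i j, 0 ≤ C i j) (hη : 0 < η)
    (hr0 : ∀ i, 0 ≤ r i) (hr1 : ∑ i, r i = 1)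
    (hc0 : ∀ j, 0 ≤ c j) (hc1 : ∑ j, c j = 1)
    (hu : ∀ i, 0 < u i) (hv : ∀ j, 0 < v j)
    (hP : ∀ i j, P i j = u i * Real.exp (-η * C i j) * v j)
    (hProw : ∀ i, ∑ j, P i j = r i) (hPcol : ∀ j, ∑ i, P i j = c j) :
    ∀ Q : Fin n → Fin n → ℝ,
      (∀ i j, 0 ≤ Q i j) → (∀ i, ∑ j, Q i j = r i) → (∀ j, ∑ i, Q i j = c j) →
      Q ≠ P →
      (∑ i, ∑ j, P i j * C i j) + η⁻¹ * ∑ i, ∑ j, P i j * Real.log (P i j)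
        < (∑ i, ∑ j, Q i j * C i j) + η⁻¹ * ∑ i, ∑ j, Q i j * Real.log (Q i j) :=
  diag_scaling_is_unique_minimizer_general n C η r c u v P hη hu hv hP hProw hPcol
end

section
/- Let B ∈ ℝ₊^{n×n} with row sums r' and column sums c', where ‖B‖₁ = 1, and suppose B minimizes ⟨P,C⟩ − η⁻¹H(P) over U_{r',c'}. Let P* ∈ U_{r,c} for given r,c ∈ Δ_n, and let P' ∈ U_{r',c'} satisfy ‖P' − P*‖₁ ≤ 2(‖r'−r‖₁ + ‖c'−c‖₁). Then ⟨B,C⟩ − ⟨P*,C⟩ ≤ 2η⁻¹ log n + 2(‖r'−r‖₁ + ‖c'−c‖₁)‖C‖_∞. -/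
private lemma neg_mul_log_le (p N : ℝ) (hp : 0 ≤ p) (hN : 0 < N) :
    -(p * Real.log p) ≤ p * Real.log N + 1 / N - p := by
  rcases eq_or_lt_of_le hp with h | h
  · simp [← h]
    positivity
  · have h1 : Real.log (1 / (N * p)) ≤ 1 / (N * p) - 1 :=
      Real.log_le_sub_one_of_pos (by positivity)
    have h2 : Real.log (1 / (N * p)) = -(Real.log N + Real.log p) := by
      rw [one_div, Real.log_inv, Real.log_mul (ne_of_gt hN) (ne_of_gt h)]
    rw [h2] at h1
    have := mul_le_mul_of_nonneg_left h1 hp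
    have hNp : p * (1 / (N * p)) = 1 / N := by
      field_simp
    nlinarith [this]

private lemma entropy_le {α : Type*} (s : Finset α) (f : α → ℝ)
    (hf : ∀ x ∈ s, 0 ≤ f x) (hsum : ∑ x ∈ s, f x = 1) :
    -∑ x ∈ s, f x * Real.log (f x) ≤ Real.log s.card := by
  have hcard : 0 < (s.card : ℝ) := by
    rcases Finset.eq_empty_or_nonempty s with h | h
    · simp [h] at hsum
    · exact_mod_cast Finset.card_pos.mpr h
  have key : ∀ x ∈ s, -(f x * Real.log (f x)) ≤
      f x * Real.log s.card + 1 / s.card - f x :=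
    fun x hx => neg_mul_log_le (f x) _ (hf x hx) hcard
  calc -∑ x ∈ s, f x * Real.log (f x) = ∑ x ∈ s, -(f x * Real.log (f x)) := by
        rw [Finset.sum_neg_distrib]
    _ ≤ ∑ x ∈ s, (f x * Real.log s.card + 1 / s.card - f x) :=
        Finset.sum_le_sum key
    _ = (∑ x ∈ s, f x) * Real.log s.card + s.card * (1 / s.card) - ∑ x ∈ s, f x := by
        rw [Finset.sum_sub_distrib, Finset.sum_add_distrib, ← Finset.sum_mul]
        simp [mul_comm]
    _ = Real.log s.card := by
        rw [hsum, mul_one_div_cancel (ne_of_gt hcard)]; ring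

/-- Key error-analysis inequality in the proof of Theorem 1: if `B` minimizes the
entropic objective over `U_{r',c'}` where `r', c'` are its marginals, `P* ∈ U_{r,c}`,
and `P' ∈ U_{r',c'}` with `‖P' − P*‖₁ ≤ 2(‖r'−r‖₁+‖c'−c‖₁)`, then
`⟨B,C⟩ − ⟨P*,C⟩ ≤ 2η⁻¹ log n + 2(‖r'−r‖₁+‖c'−c‖₁)‖C‖_∞`. -/
theorem entropic_minimizer_error_bound (n : ℕ) (C B Pstar P' : Fin n → Fin n → ℝ)
    (r c r' c' : Fin n → ℝ) (η L : ℝ)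
    (hC : ∀ i j, 0 ≤ C i j) (hL : ∀ i j, C i j ≤ L) (hη : 0 < η)
    (hr0 : ∀ i, 0 ≤ r i) (hr1 : ∑ i, r i = 1)
    (hc0 : ∀ j, 0 ≤ c j) (hc1 : ∑ j, c j = 1)
    (hB0 : ∀ i j, 0 ≤ B i j)
    (hr' : ∀ i, r' i = ∑ j, B i j) (hc' : ∀ j, c' j = ∑ i, B i j)
    (hBmass : ∑ i, ∑ j, B i j = 1)
    (hBmin : ∀ P : Fin n → Fin n → ℝ,
      (∀ i j, 0 ≤ P i j) → (∀ i, ∑ j, P i j = r' i) → (∀ j, ∑ i, P i j = c' j) →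
      (∑ i, ∑ j, B i j * C i j) + η⁻¹ * ∑ i, ∑ j, B i j * Real.log (B i j)
        ≤ (∑ i, ∑ j, P i j * C i j) + η⁻¹ * ∑ i, ∑ j, P i j * Real.log (P i j))
    (hPstar : (∀ i j, 0 ≤ Pstar i j) ∧ (∀ i, ∑ j, Pstar i j = r i) ∧
      (∀ j, ∑ i, Pstar i j = c j))
    (hP' : (∀ i j, 0 ≤ P' i j) ∧ (∀ i, ∑ j, P' i j = r' i) ∧
      (∀ j, ∑ i, P' i j = c' j))
    (hclose : ∑ i, ∑ j, |P' i j - Pstar i j| ≤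
      2 * ((∑ i, |r' i - r i|) + ∑ j, |c' j - c j|)) :
    (∑ i, ∑ j, B i j * C i j) - (∑ i, ∑ j, Pstar i j * C i j) ≤
      2 * η⁻¹ * Real.log n + 2 * ((∑ i, |r' i - r i|) + ∑ j, |c' j - c j|) * L := by
  obtain ⟨hP'0, hP'r, hP'c⟩ := hP'
  obtain ⟨hPs0, hPsr, hPsc⟩ := hPstar
  -- n ≥ 1
  have hn : 0 < n := by
    by_contra h
    push_neg at h
    interval_cases n
    simp at hBmass
  have hL0 : 0 ≤ L := le_trans (hC ⟨0, hn⟩ ⟨0, hn⟩) (hL ⟨0, hn⟩ ⟨0, hn⟩)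
  -- total mass of P' is 1
  have hP'mass : ∑ i, ∑ j, P' i j = 1 := by
    rw [show (∑ i, ∑ j, P' i j) = ∑ i, r' i from Finset.sum_congr rfl fun i _ => hP'r i]
    simp_rw [hr']
    exact hBmass
  -- entropy of P' is nonpositive in the sum-form: ∑ P' log P' ≤ 0
  have hP'le1 : ∀ i j, P' i j ≤ 1 := by
    intro i j
    rw [← hP'mass]
    calc P' i j ≤ ∑ j', P' i j' :=
          Finset.single_le_sum (fun k _ => hP'0 i k) (Finset.mem_univ j)
      _ ≤ ∑ i', ∑ j', P' i' j' :=
          Finset.single_le_sum (fun k (_ : k ∈ Finset.univ) => Finset.sum_nonneg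
            fun j' _ => hP'0 k j') (Finset.mem_univ i)
  have hP'ent : ∑ i, ∑ j, P' i j * Real.log (P' i j) ≤ 0 :=
    Finset.sum_nonpos fun i _ => Finset.sum_nonpos fun j _ =>
      Real.mul_log_nonpos (hP'0 i j) (hP'le1 i j)
  -- entropy of B ≥ -2 log n : i.e. -∑ B log B ≤ 2 log n
  have hBent : -∑ i, ∑ j, B i j * Real.log (B i j) ≤ 2 * Real.log n := by
    have h := entropy_le (Finset.univ : Finset (Fin n × Fin n))
      (fun p => B p.1 p.2) (fun p _ => hB0 p.1 p.2)
      (by rw [Fintype.sum_prod_type]; exact hBmass)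
    rw [Fintype.sum_prod_type] at h
    have hcard : ((Finset.univ : Finset (Fin n × Fin n)).card : ℝ) = (n : ℝ) ^ 2 := by
      simp [Finset.card_univ, sq]
    rw [hcard, Real.log_pow] at h
    exact_mod_cast h
  -- minimality applied to P'
  have hmin := hBmin P' hP'0 hP'r hP'c
  have step1 : (∑ i, ∑ j, B i j * C i j) - (∑ i, ∑ j, P' i j * C i j)
      ≤ 2 * η⁻¹ * Real.log n := by
    have hηinv : 0 ≤ η⁻¹ := le_of_lt (inv_pos.mpr hη)
    nlinarith [mul_le_mul_of_nonneg_left hBent hηinv,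
      mul_le_mul_of_nonneg_left hP'ent hηinv]
  have step2 : (∑ i, ∑ j, P' i j * C i j) - (∑ i, ∑ j, Pstar i j * C i j)
      ≤ 2 * ((∑ i, |r' i - r i|) + ∑ j, |c' j - c j|) * L := by
    have h1 : (∑ i, ∑ j, P' i j * C i j) - (∑ i, ∑ j, Pstar i j * C i j)
        ≤ ∑ i, ∑ j, |P' i j - Pstar i j| * L := by
      rw [← Finset.sum_sub_distrib]
      refine Finset.sum_le_sum fun i _ => ?_
      rw [← Finset.sum_sub_distrib]
      refine Finset.sum_le_sum fun j _ => ?_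
      rw [← sub_mul]
      calc (P' i j - Pstar i j) * C i j ≤ |P' i j - Pstar i j| * C i j :=
            mul_le_mul_of_nonneg_right (le_abs_self _) (hC i j)
        _ ≤ |P' i j - Pstar i j| * L :=
            mul_le_mul_of_nonneg_left (hL i j) (abs_nonneg _)
    calc (∑ i, ∑ j, P' i j * C i j) - (∑ i, ∑ j, Pstar i j * C i j)
        ≤ ∑ i, ∑ j, |P' i j - Pstar i j| * L := h1
      _ = (∑ i, ∑ j, |P' i j - Pstar i j|) * L := by
          rw [Finset.sum_mul]; exact Finset.sum_congr rfl fun i _ => (Finset.sum_mul ..).symm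
      _ ≤ 2 * ((∑ i, |r' i - r i|) + ∑ j, |c' j - c j|) * L :=
          mul_le_mul_of_nonneg_right hclose hL0
  linarith
end
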